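/- Let D ≥ 1, let L ∈ ℝ^D with L_i > 0 for all i, and let c ∈ ℝ^D. Define u : ℝ^D → ℝ^D by u_i(z) = −c_i · (L_i/π) · (1 + cos(π z_i / L_i)) · ∏_{j ≠ i} sin(π z_j / L_j). Then u is differentiable on the open box ∏_{i=1}^{D} (−L_i, L_i), and for every z in this open box, div u(z) = (Σ_{i=1}^{D} c_i) · ∏_{i=1}^{D} sin(π z_i / L_i). In particular, if Σ_{i=1}^{D} c_i = 0, then div u(z) = 0 for every z in the open box. -/

import Mathlib

open Real Finset

/-!
Each component is separable: `uᵢ(z) = gᵢ(zᵢ) ∏_{j ≠ i} hⱼ(zⱼ)` with `hⱼ(t) = sin(π t / Lⱼ)`.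
Along the `i`-th coordinate line only the factor `gᵢ` varies, so
`∂uᵢ/∂zᵢ = gᵢ'(zᵢ) ∏_{j ≠ i} hⱼ(zⱼ)`, and the profile `gᵢ` is chosen so that `gᵢ' = cᵢ hᵢ`.
Every term of the divergence is therefore `cᵢ ∏ⱼ hⱼ(zⱼ)`.
-/

noncomputable def divergence {ι : Type*} [Fintype ι] [DecidableEq ι]
    (u : (ι → ℝ) → ι → ℝ) (z : ι → ℝ) : ℝ :=
  ∑ i, fderiv ℝ u z (Pi.single i 1) i

theorem fderiv_single_apply_eq_deriv_update {ι : Type*} [Fintype ι] [DecidableEq ι]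
    {u : (ι → ℝ) → ι → ℝ} {z : ι → ℝ} (hu : DifferentiableAt ℝ u z) (i : ι) :
    fderiv ℝ u z (Pi.single i 1) i = deriv (fun t => u (Function.update z i t) i) (z i) := by
  have hline : HasDerivAt (fun t => u (Function.update z i t)) (fderiv ℝ u z (Pi.single i 1))
      (z i) :=
    hu.hasFDerivAt.comp_hasDerivAt_of_eq (z i) (hasDerivAt_update z i (z i))
      (Function.update_eq_self i z).symm
  exact ((hasDerivAt_pi.mp hline) i).deriv.symm

section Separable

variable {ι : Type*} [Fintype ι] [DecidableEq ι] {g h : ι → ℝ → ℝ} {z : ι → ℝ}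

theorem differentiableAt_separable (hg : ∀ i, DifferentiableAt ℝ (g i) (z i))
    (hh : ∀ i, DifferentiableAt ℝ (h i) (z i)) :
    DifferentiableAt ℝ (fun w i => g i (w i) * ∏ j ∈ univ.erase i, h j (w j)) z := by
  have hcoord : ∀ f : ι → ℝ → ℝ, (∀ i, DifferentiableAt ℝ (f i) (z i)) →
      ∀ i, DifferentiableAt ℝ (fun w : ι → ℝ => f i (w i)) z := fun f hf i =>
    (hf i).comp z (differentiableAt_apply i z)
  refine differentiableAt_pi.mpr fun i => (hcoord g hg i).mul ?_
  exact (HasFDerivAt.finsetProd fun j _ => (hcoord h hh j).hasFDerivAt).differentiableAt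

theorem divergence_separable {g' : ι → ℝ} (hg : ∀ i, HasDerivAt (g i) (g' i) (z i))
    (hh : ∀ i, DifferentiableAt ℝ (h i) (z i)) :
    divergence (fun w i => g i (w i) * ∏ j ∈ univ.erase i, h j (w j)) z =
      ∑ i, g' i * ∏ j ∈ univ.erase i, h j (z j) := by
  refine sum_congr rfl fun i _ => ?_
  rw [fderiv_single_apply_eq_deriv_update
    (differentiableAt_separable (fun i => (hg i).differentiableAt) hh)]
  have hline : (fun t => g i (Function.update z i t i) *
      ∏ j ∈ univ.erase i, h j (Function.update z i t j)) =
      fun t => g i t * ∏ j ∈ univ.erase i, h j (z j) := by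
    funext t
    rw [Function.update_self]
    congr 1
    exact prod_congr rfl fun j hj => by rw [Function.update_of_ne (ne_of_mem_erase hj)]
  rw [hline]
  exact ((hg i).mul_const _).deriv

end Separable

theorem hasDerivAt_neg_mul_one_add_cos {L : ℝ} (hL : L ≠ 0) (c x : ℝ) :
    HasDerivAt (fun t => -c * (L / π) * (1 + cos (π * t / L))) (c * sin (π * x / L)) x := by
  have hscale : HasDerivAt (fun t => π * t / L) (π / L) x := by
    simpa using ((hasDerivAt_id x).const_mul π).div_const L
  refine ((hscale.cos.const_add 1).const_mul (-c * (L / π))).congr_deriv ?_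
  field_simp [pi_ne_zero]

theorem stmt7_general (D : ℕ) (L c : Fin D → ℝ) (hL : ∀ i, 0 < L i)
    (u : (Fin D → ℝ) → (Fin D → ℝ))
    (hu : ∀ (z : Fin D → ℝ) (i : Fin D),
      u z i = -c i * (L i / π) * (1 + Real.cos (π * z i / L i)) *
        ∏ j ∈ Finset.univ.erase i, Real.sin (π * z j / L j)) :
    ∀ z : Fin D → ℝ, (∀ i, z i ∈ Set.Ioo (-(L i)) (L i)) →
      DifferentiableAt ℝ u z ∧
      (∑ i, fderiv ℝ u z (Pi.single i 1) i =
        (∑ i, c i) * ∏ i, Real.sin (π * z i / L i)) ∧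
      ((∑ i, c i) = 0 → ∑ i, fderiv ℝ u z (Pi.single i 1) i = 0) := by
  intro z _
  have hsep : u = fun w i => -c i * (L i / π) * (1 + cos (π * w i / L i)) *
      ∏ j ∈ univ.erase i, sin (π * w j / L j) := funext fun w => funext (hu w)
  have hg : ∀ i, HasDerivAt (fun t => -c i * (L i / π) * (1 + cos (π * t / L i)))
      (c i * sin (π * z i / L i)) (z i) := fun i =>
    hasDerivAt_neg_mul_one_add_cos (hL i).ne' (c i) (z i)
  have hh : ∀ i, DifferentiableAt ℝ (fun t => sin (π * t / L i)) (z i) := by fun_prop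
  have hdiv : divergence u z = (∑ i, c i) * ∏ i, sin (π * z i / L i) := by
    rw [hsep, divergence_separable hg hh, sum_mul]
    exact sum_congr rfl fun i _ => by rw [mul_assoc, mul_prod_erase univ (fun j => sin (π * z j / L j)) (mem_univ i)]
  exact ⟨hsep ▸ differentiableAt_separable (fun i => (hg i).differentiableAt) hh, hdiv,
    fun hc => hdiv.trans (by rw [hc, zero_mul])⟩

/-- The paper's incompressible-flow field
`uᵢ(z) = -cᵢ (Lᵢ/π) (1 + cos(π zᵢ/Lᵢ)) ∏_{j≠i} sin(π zⱼ/Lⱼ)` is differentiable on the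
open box `∏ (-Lᵢ, Lᵢ)` with divergence `(∑ cᵢ) ∏ sin(π zᵢ/Lᵢ)` there; in particular it is
divergence-free on the box whenever `∑ cᵢ = 0`. -/
theorem stmt7 (D : ℕ) (hD : 1 ≤ D) (L c : Fin D → ℝ) (hL : ∀ i, 0 < L i)
    (u : (Fin D → ℝ) → (Fin D → ℝ))
    (hu : ∀ (z : Fin D → ℝ) (i : Fin D),
      u z i = -c i * (L i / π) * (1 + Real.cos (π * z i / L i)) *
        ∏ j ∈ Finset.univ.erase i, Real.sin (π * z j / L j)) :
    ∀ z : Fin D → ℝ, (∀ i, z i ∈ Set.Ioo (-(L i)) (L i)) →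
      DifferentiableAt ℝ u z ∧
      (∑ i, fderiv ℝ u z (Pi.single i 1) i =
        (∑ i, c i) * ∏ i, Real.sin (π * z i / L i)) ∧
      ((∑ i, c i) = 0 → ∑ i, fderiv ℝ u z (Pi.single i 1) i = 0) :=
  stmt7_general D L c hL u hu
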